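/- arXiv:2507.18474 — 2 statements merged into one kernel-verified Lean document; each statement's English description precedes it below -/
import Mathlib

section
/- Let γ ≥ 2. There exists a constant c > 0 depending only on γ and n such that for all z, z' ∈ ℝⁿ: |V_γ(z) − V_γ(z')|² ≤ c ⟨|z|^{γ-2} z − |z'|^{γ-2} z', z − z'⟩, where V_γ(z) = |z|^{(γ-2)/2} z and ⟨·,·⟩ is the Euclidean inner product. -/
/-!
Write `A = ‖z‖ ^ p`, `B = ‖z'‖ ^ p` with `p = (γ - 2) / 2 ≥ 0`. The identity
`⟪α • z - β • z', z - z'⟫ = (α + β) / 2 * ‖z - z'‖ ^ 2 + (α - β) / 2 * (‖z‖ ^ 2 - ‖z'‖ ^ 2)`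
with `α = A ^ 2`, `β = B ^ 2` bounds the right-hand side below by `(A ^ 2 + B ^ 2) / 2 * ‖z - z'‖ ^ 2`,
since `α - β` and `‖z‖ ^ 2 - ‖z'‖ ^ 2` have the same sign. For `‖z'‖ ≤ ‖z‖`, splitting
`A • z - B • z' = B • (z - z') + (A - B) • z` and bounding `(A - B) * ‖z‖` by the tangent line of the
convex function `t ↦ t ^ (p + 1)` gives `‖A • z - B • z'‖ ≤ (p + 1) * (A + B) * ‖z - z'‖`.
Together these give the claim with `c = 4 * (p + 1) ^ 2 = γ ^ 2`.
-/

namespace Real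

theorem rpow_sub_rpow_le_mul_sub {q a b : ℝ} (hq : 1 ≤ q) (hb : 0 ≤ b) (hba : b ≤ a) :
    a ^ q - b ^ q ≤ q * a ^ (q - 1) * (a - b) := by
  rcases hba.eq_or_lt with rfl | hlt
  · simp
  have ha : 0 < a := hb.trans_lt hlt
  have hslope : slope (· ^ q) b a ≤ q * a ^ (q - 1) :=
    (convexOn_rpow hq).slope_le_of_hasDerivAt hb ha.le hlt
      (hasDerivAt_rpow_const (Or.inl ha.ne'))
  rwa [slope_def_field, div_le_iff₀ (sub_pos.mpr hlt)] at hslope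

theorem sub_rpow_mul_le {p a b : ℝ} (hp : 0 ≤ p) (hb : 0 ≤ b) (hba : b ≤ a) :
    (a ^ p - b ^ p) * a ≤ (p + 1) * a ^ p * (a - b) := by
  have hp1 : p + 1 ≠ 0 := by linarith
  calc (a ^ p - b ^ p) * a = a ^ (p + 1) - b ^ p * a := by
        rw [rpow_add_one' (hb.trans hba) hp1]; ring
    _ ≤ a ^ (p + 1) - b ^ (p + 1) := by
        rw [rpow_add_one' hb hp1]
        gcongr
    _ ≤ (p + 1) * a ^ (p + 1 - 1) * (a - b) := rpow_sub_rpow_le_mul_sub (by linarith) hb hba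
    _ = (p + 1) * a ^ p * (a - b) := by rw [add_sub_cancel_right]

end Real

section InnerProductSpace

variable {F : Type*} [NormedAddCommGroup F] [InnerProductSpace ℝ F]

theorem real_inner_smul_sub_smul_sub (α β : ℝ) (x y : F) :
    inner ℝ (α • x - β • y) (x - y) =
      (α + β) / 2 * ‖x - y‖ ^ 2 + (α - β) / 2 * (‖x‖ ^ 2 - ‖y‖ ^ 2) := by
  rw [norm_sub_sq_real]
  simp only [inner_sub_left, inner_sub_right, real_inner_smul_left, real_inner_self_eq_norm_sq,
    real_inner_comm x y]
  ring

/-- `V_γ = normRpowSMul ((γ - 2) / 2)`. -/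
noncomputable def normRpowSMul (p : ℝ) (x : F) : F := ‖x‖ ^ p • x

theorem mul_norm_sub_sq_le_inner_normRpowSMul_sub {q : ℝ} (hq : 0 ≤ q) (x y : F) :
    (‖x‖ ^ q + ‖y‖ ^ q) / 2 * ‖x - y‖ ^ 2 ≤
      inner ℝ (normRpowSMul q x - normRpowSMul q y) (x - y) := by
  rw [normRpowSMul, normRpowSMul, real_inner_smul_sub_smul_sub, le_add_iff_nonneg_right]
  have hsign : 0 ≤ (‖x‖ ^ q - ‖y‖ ^ q) * (‖x‖ ^ 2 - ‖y‖ ^ 2) := by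
    rcases le_total ‖y‖ ‖x‖ with h | h
    · exact mul_nonneg (sub_nonneg.mpr (Real.rpow_le_rpow (norm_nonneg y) h hq))
        (sub_nonneg.mpr (pow_le_pow_left₀ (norm_nonneg y) h 2))
    · exact mul_nonneg_of_nonpos_of_nonpos
        (sub_nonpos.mpr (Real.rpow_le_rpow (norm_nonneg x) h hq))
        (sub_nonpos.mpr (pow_le_pow_left₀ (norm_nonneg x) h 2))
  linarith

theorem norm_normRpowSMul_sub_le_of_norm_le {p : ℝ} (hp : 0 ≤ p) {x y : F} (hyx : ‖y‖ ≤ ‖x‖) :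
    ‖normRpowSMul p x - normRpowSMul p y‖ ≤ (p + 1) * (‖x‖ ^ p + ‖y‖ ^ p) * ‖x - y‖ := by
  set A := ‖x‖ ^ p
  set B := ‖y‖ ^ p
  have hB : 0 ≤ B := Real.rpow_nonneg (norm_nonneg y) p
  have hBA : B ≤ A := Real.rpow_le_rpow (norm_nonneg y) hyx hp
  have htangent : (A - B) * ‖x‖ ≤ (p + 1) * A * ‖x - y‖ :=
    (Real.sub_rpow_mul_le hp (norm_nonneg y) hyx).trans <| by
      gcongr
      exact norm_sub_norm_le x y
  calc ‖A • x - B • y‖ = ‖B • (x - y) + (A - B) • x‖ := by congr 1; module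
    _ ≤ B * ‖x - y‖ + (A - B) * ‖x‖ := by
        refine (norm_add_le _ _).trans_eq ?_
        rw [norm_smul, norm_smul, Real.norm_of_nonneg hB, Real.norm_of_nonneg (sub_nonneg.mpr hBA)]
    _ ≤ (p + 1) * (A + B) * ‖x - y‖ := by
        nlinarith [mul_nonneg (mul_nonneg hp hB) (norm_nonneg (x - y))]

theorem norm_normRpowSMul_sub_le {p : ℝ} (hp : 0 ≤ p) (x y : F) :
    ‖normRpowSMul p x - normRpowSMul p y‖ ≤ (p + 1) * (‖x‖ ^ p + ‖y‖ ^ p) * ‖x - y‖ := by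
  rcases le_total ‖y‖ ‖x‖ with h | h
  · exact norm_normRpowSMul_sub_le_of_norm_le hp h
  · simpa only [norm_sub_rev, add_comm (‖y‖ ^ p)] using norm_normRpowSMul_sub_le_of_norm_le hp h

theorem norm_normRpowSMul_sub_sq_le_inner {p : ℝ} (hp : 0 ≤ p) (x y : F) :
    ‖normRpowSMul p x - normRpowSMul p y‖ ^ 2 ≤
      4 * (p + 1) ^ 2 * inner ℝ (normRpowSMul (2 * p) x - normRpowSMul (2 * p) y) (x - y) := by
  have hsq (t : ℝ) (ht : 0 ≤ t) : t ^ (2 * p) = (t ^ p) ^ 2 := by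
    rw [mul_comm, Real.rpow_mul ht, Real.rpow_two]
  have hlower := mul_norm_sub_sq_le_inner_normRpowSMul_sub (by positivity : 0 ≤ 2 * p) x y
  rw [hsq _ (norm_nonneg x), hsq _ (norm_nonneg y)] at hlower
  set A := ‖x‖ ^ p
  set B := ‖y‖ ^ p
  calc ‖normRpowSMul p x - normRpowSMul p y‖ ^ 2 ≤ ((p + 1) * (A + B) * ‖x - y‖) ^ 2 :=
        pow_le_pow_left₀ (norm_nonneg _) (norm_normRpowSMul_sub_le hp x y) 2
    _ ≤ 4 * (p + 1) ^ 2 * ((A ^ 2 + B ^ 2) / 2 * ‖x - y‖ ^ 2) := by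
        nlinarith [mul_nonneg (mul_nonneg (sq_nonneg (p + 1)) (sq_nonneg (A - B)))
          (sq_nonneg ‖x - y‖)]
    _ ≤ _ := by gcongr

end InnerProductSpace

theorem V_monotonicity (n : ℕ) (γ : ℝ) (hγ : 2 ≤ γ) :
    ∃ c : ℝ, 0 < c ∧
      ∀ z z' : EuclideanSpace ℝ (Fin n),
        ‖(‖z‖ ^ ((γ - 2) / 2)) • z - (‖z'‖ ^ ((γ - 2) / 2)) • z'‖ ^ 2 ≤
          c * (inner ℝ ((‖z‖ ^ (γ - 2)) • z - (‖z'‖ ^ (γ - 2)) • z') (z - z') : ℝ) := by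
  refine ⟨γ ^ 2, by positivity, fun z z' => ?_⟩
  have key := norm_normRpowSMul_sub_sq_le_inner (by linarith : 0 ≤ (γ - 2) / 2) z z'
  rwa [show 2 * ((γ - 2) / 2) = γ - 2 by ring, show 4 * ((γ - 2) / 2 + 1) ^ 2 = γ ^ 2 by ring]
    at key
end

section
/- Let θ ∈ [0,1), C > 0 and let (Y_j)_{j≥1} be a sequence of nonnegative reals satisfying Y_{j+1} ≤ D^j (Y_j + 1)^{e_j} for all j ≥ 1, where D ≥ 1 and e_j = (γ_j/γ_{j−1})(1 + κ_j) with γ_j ≥ γ₀ > 0 increasing and κ_j ≥ 0. Then for all N ≥ 1: Y_{N+1} ≤ (2D)^{∑_{j=1}^N j (γ_N/γ_j) ∏_{k=j}^N (1+κ_k)} · (Y₁ + 1)^{(γ_N/γ₀) ∏_{j=1}^N (1+κ_j)}. -/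
/-!
With `Z j = Y j + 1 ≥ 1` the recursion gives
`Z (j+1) ≤ 2 D^j Z_j^{e_j} ≤ (2D)^{j(1+κ_j)} Z_j^{e_j}`, because `D^j Z_j^{e_j} ≥ 1` absorbs
the `+1`. Unrolling a recursion `Z (j+1) ≤ A^{a_j} Z_j^{e_j}` gives
`Z (N+1) ≤ A^{∑_j a_j ∏_{j<k≤N} e_k} Z_1^{∏_{k≤N} e_k}`, and the products of the
`e_k = (γ_k/γ_{k-1})(1+κ_k)` telescope in `γ`.
-/

open Finset

theorem prod_Ioc_div_pred_eq {K : Type*} [Field K] {f : ℕ → K} (hf : ∀ n, f n ≠ 0)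
    {j N : ℕ} (hjN : j ≤ N) :
    ∏ k ∈ Ioc j N, f k / f (k - 1) = f N / f j := by
  induction N, hjN using Nat.le_induction with
  | base => simp [div_self (hf j)]
  | succ N hjN ih =>
    rw [prod_Ioc_succ_top hjN, ih, Nat.add_sub_cancel]
    field_simp [hf N]

theorem le_rpow_sum_mul_rpow_prod_of_le_rpow_mul_rpow {A : ℝ} (hA : 0 < A) {Z a e : ℕ → ℝ}
    (hZ : ∀ j, 0 ≤ Z j) (he : ∀ j, 0 ≤ e j)
    (hrec : ∀ j, 1 ≤ j → Z (j + 1) ≤ A ^ a j * Z j ^ e j) (N : ℕ) :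
    Z (N + 1) ≤
      A ^ (∑ j ∈ Icc 1 N, a j * ∏ k ∈ Ioc j N, e k) * Z 1 ^ ∏ j ∈ Icc 1 N, e j := by
  induction N with
  | zero => simp
  | succ N ih =>
    set S := ∑ j ∈ Icc 1 N, a j * ∏ k ∈ Ioc j N, e k
    set P := ∏ j ∈ Icc 1 N, e j
    have hS : ∑ j ∈ Icc 1 (N + 1), a j * ∏ k ∈ Ioc j (N + 1), e k =
        a (N + 1) + S * e (N + 1) := by
      rw [sum_Icc_succ_top (by omega), Ioc_self, prod_empty, mul_one, add_comm, sum_mul]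
      congr 1
      refine sum_congr rfl fun j hj => ?_
      rw [prod_Ioc_succ_top (mem_Icc.mp hj).2, mul_assoc]
    rw [hS, prod_Icc_succ_top (by omega)]
    calc Z (N + 1 + 1) ≤ A ^ a (N + 1) * Z (N + 1) ^ e (N + 1) := hrec _ (by omega)
      _ ≤ A ^ a (N + 1) * (A ^ S * Z 1 ^ P) ^ e (N + 1) := by
        gcongr
        · exact hZ _
        · exact he _
      _ = A ^ (a (N + 1) + S * e (N + 1)) * Z 1 ^ (P * e (N + 1)) := by
        rw [Real.mul_rpow (by positivity) (Real.rpow_nonneg (hZ 1) _), ← Real.rpow_mul hA.le,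
          ← Real.rpow_mul (hZ 1), Real.rpow_add hA, mul_assoc]

theorem two_mul_pow_le_rpow {D s : ℝ} {j : ℕ} (hD : 1 ≤ D) (hj : 1 ≤ j) (hs : (j : ℝ) ≤ s) :
    2 * D ^ j ≤ (2 * D) ^ s :=
  calc 2 * D ^ j ≤ 2 ^ j * D ^ j := by gcongr; simpa using pow_le_pow_right₀ one_le_two hj
    _ = (2 * D) ^ (j : ℝ) := by rw [Real.rpow_natCast, mul_pow]
    _ ≤ (2 * D) ^ s := Real.rpow_le_rpow_of_exponent_le (by linarith) hs

theorem add_one_le_rpow_mul_of_le_pow_mul {D W y s : ℝ} {j : ℕ} (hD : 1 ≤ D) (hW : 1 ≤ W)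
    (hj : 1 ≤ j) (hs : (j : ℝ) ≤ s) (hy : y ≤ D ^ j * W) : y + 1 ≤ (2 * D) ^ s * W := by
  have hDW : 1 ≤ D ^ j * W := one_le_mul_of_one_le_of_one_le (one_le_pow₀ hD) hW
  calc y + 1 ≤ 2 * D ^ j * W := by linarith
    _ ≤ (2 * D) ^ s * W := by gcongr; exact two_mul_pow_le_rpow hD hj hs

noncomputable def moserExponent (γ κ : ℕ → ℝ) (k : ℕ) : ℝ := γ k / γ (k - 1) * (1 + κ k)

section Exponents

variable {γ : ℕ → ℝ} (κ : ℕ → ℝ) (hγ : ∀ n, γ n ≠ 0)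
include hγ

theorem prod_Ioc_moserExponent {j N : ℕ} (hjN : j ≤ N) :
    ∏ k ∈ Ioc j N, moserExponent γ κ k = γ N / γ j * ∏ k ∈ Ioc j N, (1 + κ k) := by
  unfold moserExponent
  rw [prod_mul_distrib, prod_Ioc_div_pred_eq hγ hjN]

theorem prod_Icc_one_moserExponent (N : ℕ) :
    ∏ k ∈ Icc 1 N, moserExponent γ κ k = γ N / γ 0 * ∏ k ∈ Icc 1 N, (1 + κ k) := by
  rw [show Icc 1 N = Ioc 0 N from Icc_add_one_left_eq_Ioc 0 N,
    prod_Ioc_moserExponent κ hγ N.zero_le]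

theorem sum_Icc_one_mul_prod_moserExponent (N : ℕ) :
    ∑ j ∈ Icc 1 N, (j : ℝ) * (1 + κ j) * ∏ k ∈ Ioc j N, moserExponent γ κ k =
      ∑ j ∈ Icc 1 N, (j : ℝ) * (γ N / γ j) * ∏ k ∈ Icc j N, (1 + κ k) := by
  refine sum_congr rfl fun j hj => ?_
  have hjN := (mem_Icc.mp hj).2
  rw [prod_Ioc_moserExponent κ hγ hjN, ← mul_prod_Ioc_eq_prod_Icc hjN]
  ring

end Exponents

theorem moser_iteration_bound_general (D : ℝ) (hD : 1 ≤ D)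
    (Y γ κ : ℕ → ℝ)
    (hY : ∀ j, 0 ≤ Y j) (hγ0 : 0 < γ 0) (hγmono : Monotone γ)
    (hκ : ∀ j, 0 ≤ κ j)
    (hrec : ∀ j : ℕ, 1 ≤ j →
      Y (j + 1) ≤ D ^ j * (Y j + 1) ^ ((γ j / γ (j - 1)) * (1 + κ j))) :
    ∀ N : ℕ, 1 ≤ N →
      Y (N + 1) ≤
        (2 * D) ^ (∑ j ∈ Finset.Icc 1 N,
            (j : ℝ) * (γ N / γ j) * ∏ k ∈ Finset.Icc j N, (1 + κ k)) *
          (Y 1 + 1) ^ ((γ N / γ 0) * ∏ j ∈ Finset.Icc 1 N, (1 + κ j)) := by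
  intro N _
  have hγ : ∀ n, 0 < γ n := fun n => hγ0.trans_le (hγmono n.zero_le)
  have hZ : ∀ j, 0 ≤ Y j + 1 := fun j => by linarith [hY j]
  have he : ∀ j, 0 ≤ moserExponent γ κ j := fun j =>
    mul_nonneg (div_nonneg (hγ j).le (hγ _).le) (by linarith [hκ j])
  have hstep : ∀ j, 1 ≤ j →
      Y (j + 1) + 1 ≤ (2 * D) ^ ((j : ℝ) * (1 + κ j)) * (Y j + 1) ^ moserExponent γ κ j :=
    fun j hj => add_one_le_rpow_mul_of_le_pow_mul hD
      (Real.one_le_rpow (by linarith [hY j]) (he j)) hj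
      (le_mul_of_one_le_right (Nat.cast_nonneg j) (by linarith [hκ j])) (hrec j hj)
  have hiter := le_rpow_sum_mul_rpow_prod_of_le_rpow_mul_rpow (by linarith) hZ he hstep N
  rw [sum_Icc_one_mul_prod_moserExponent κ (fun n => (hγ n).ne'),
    prod_Icc_one_moserExponent κ (fun n => (hγ n).ne')] at hiter
  linarith

theorem moser_iteration_bound (θ C D : ℝ) (hθ0 : 0 ≤ θ) (hθ1 : θ < 1)
    (hC : 0 < C) (hD : 1 ≤ D)
    (Y γ κ : ℕ → ℝ)
    (hY : ∀ j, 0 ≤ Y j) (hγ0 : 0 < γ 0) (hγmono : Monotone γ)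
    (hκ : ∀ j, 0 ≤ κ j)
    (hrec : ∀ j : ℕ, 1 ≤ j →
      Y (j + 1) ≤ D ^ j * (Y j + 1) ^ ((γ j / γ (j - 1)) * (1 + κ j))) :
    ∀ N : ℕ, 1 ≤ N →
      Y (N + 1) ≤
        (2 * D) ^ (∑ j ∈ Finset.Icc 1 N,
            (j : ℝ) * (γ N / γ j) * ∏ k ∈ Finset.Icc j N, (1 + κ k)) *
          (Y 1 + 1) ^ ((γ N / γ 0) * ∏ j ∈ Finset.Icc 1 N, (1 + κ j)) :=
  moser_iteration_bound_general D hD Y γ κ hY hγ0 hγmono hκ hrec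
end
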